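/- arXiv:1509.00728 — 6 statements merged into one kernel-verified Lean document; each statement's English description precedes it below -/
import Mathlib

section
/- For any directed graph 𝒢=(𝒱,ℰ) and any collection {G*_ij}_{(i,j)∈ℰ} of matrices in GL(d,ℝ) that is transitively consistent for 𝒢, there exists a collection {G*_i}_{i∈𝒱} of matrices in GL(d,ℝ) such that G*_ij = G*_i^{−1}·G*_j for all (i,j)∈ℰ. -/
open Matrix Kronecker

/-- An edge-indexed collection `G` of invertible matrices is *transitively consistent*
for the graph with vertex set `Fin n` and edge set `E` if it extends to a collection
indexed by all ordered pairs that is transitively consistent for the complete graph. -/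
def TransConsistent (n d : ℕ) (E : Finset (Fin n × Fin n))
    (G : Fin n → Fin n → Matrix (Fin d) (Fin d) ℝ) : Prop :=
  ∃ Gc : Fin n → Fin n → Matrix (Fin d) (Fin d) ℝ,
    (∀ i j, IsUnit (Gc i j)) ∧
    (∀ i j k, Gc i k = Gc i j * Gc j k) ∧
    (∀ i j, (i, j) ∈ E → Gc i j = G i j)

/-- The graph is connected: any two nodes are joined by an undirected path. -/
def UConnected (n : ℕ) (E : Finset (Fin n × Fin n)) : Prop :=
  ∀ i j : Fin n, Relation.ReflTransGen (fun a b => (a, b) ∈ E ∨ (b, a) ∈ E) i j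

/-- The graph is quasi-strongly connected: it has a center, i.e. a node reachable
from every node by a directed path. -/
def QSC (n : ℕ) (E : Finset (Fin n × Fin n)) : Prop :=
  ∃ c : Fin n, ∀ i : Fin n, Relation.ReflTransGen (fun a b => (a, b) ∈ E) i c

/-- The `Z`-matrix: the `(i,i)` block is `|N_i| • I_d`; for `i ≠ j` the `(i,j)` block is
`-G i j` if `(i,j)` is an edge and `0` otherwise. -/
def Zmat (n d : ℕ) (E : Finset (Fin n × Fin n))
    (G : Fin n → Fin n → Matrix (Fin d) (Fin d) ℝ) :
    Matrix (Fin n × Fin d) (Fin n × Fin d) ℝ :=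
  fun p q =>
    if p.1 = q.1 then
      ((E.filter fun e => e.1 = p.1).card : ℝ) * (if p.2 = q.2 then 1 else 0)
    else if (p.1, q.1) ∈ E then -G p.1 q.1 p.2 q.2 else 0

/-- The `H`-matrix: the `(i,i)` block is `|N_i| • I_d + ∑_{k : (k,i) ∈ E} (G k i)ᵀ * G k i`;
for `i ≠ j` the `(i,j)` block is `-[(i,j) ∈ E] • G i j - [(j,i) ∈ E] • (G j i)ᵀ`. -/
def Hmat (n d : ℕ) (E : Finset (Fin n × Fin n))
    (G : Fin n → Fin n → Matrix (Fin d) (Fin d) ℝ) :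
    Matrix (Fin n × Fin d) (Fin n × Fin d) ℝ :=
  fun p q =>
    if p.1 = q.1 then
      ((E.filter fun e => e.1 = p.1).card : ℝ) * (if p.2 = q.2 then 1 else 0)
        + ∑ k : Fin n, (if (k, p.1) ∈ E then ((G k p.1)ᵀ * G k p.1) p.2 q.2 else 0)
    else
      (if (p.1, q.1) ∈ E then -G p.1 q.1 p.2 q.2 else 0)
        + (if (q.1, p.1) ∈ E then -(G q.1 p.1)ᵀ p.2 q.2 else 0)

/-- Adjacency matrix of the graph. -/
def adjMat (n : ℕ) (E : Finset (Fin n × Fin n)) : Matrix (Fin n) (Fin n) ℝ :=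
  fun i j => if (i, j) ∈ E then 1 else 0

/-- Graph Laplacian `L = diag(A·1) - A`. -/
def lapMat (n : ℕ) (E : Finset (Fin n × Fin n)) : Matrix (Fin n) (Fin n) ℝ :=
  Matrix.diagonal (fun i => ∑ j, adjMat n E i j) - adjMat n E

/-- Block diagonal matrix `diag(G 1, …, G n)` with `d × d` blocks. -/
def blkDiag (n d : ℕ) (G : Fin n → Matrix (Fin d) (Fin d) ℝ) :
    Matrix (Fin n × Fin d) (Fin n × Fin d) ℝ :=
  fun p q => if p.1 = q.1 then G p.1 p.2 q.2 else 0

/-- `U₁({G_i})`: the block column matrix stacking `(G 1)⁻ᵀ, …, (G n)⁻ᵀ`. -/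
noncomputable def U1 (n d : ℕ) (G : Fin n → Matrix (Fin d) (Fin d) ℝ) :
    Matrix (Fin n × Fin d) (Fin d) ℝ :=
  fun p c => ((G p.1)⁻¹)ᵀ p.2 c

/-- The `i`-th `d × d` block of a block column matrix `X ∈ ℝ^{nd × d}`. -/
def blk (n d : ℕ) (X : Matrix (Fin n × Fin d) (Fin d) ℝ) (i : Fin n) :
    Matrix (Fin d) (Fin d) ℝ :=
  fun a b => X (i, a) b

/-- Frobenius norm of a real matrix. -/
noncomputable def frob {m k : Type*} [Fintype m] [Fintype k] (M : Matrix m k ℝ) : ℝ :=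
  Real.sqrt (∑ i, ∑ j, (M i j) ^ 2)

/-- Squared Frobenius norm of a real matrix. -/
def frobSq {m k : Type*} [Fintype m] [Fintype k] (M : Matrix m k ℝ) : ℝ :=
  ∑ i, ∑ j, (M i j) ^ 2

/-- Euclidean norm on `ℝ^m`. -/
noncomputable def euclNorm {m : Type*} [Fintype m] (x : m → ℝ) : ℝ :=
  Real.sqrt (∑ i, (x i) ^ 2)

/-- a transitively consistent collection admits node matrices `{G_i}` in
`GL(d,ℝ)` with `G_ij = G_i⁻¹ * G_j` on all edges. -/
theorem stmt2 (n d : ℕ) (E : Finset (Fin n × Fin n))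
    (Gs : Fin n → Fin n → Matrix (Fin d) (Fin d) ℝ)
    (htc : TransConsistent n d E Gs) :
    ∃ G : Fin n → Matrix (Fin d) (Fin d) ℝ,
      (∀ i, IsUnit (G i)) ∧ ∀ i j, (i, j) ∈ E → Gs i j = (G i)⁻¹ * G j := by
  obtain ⟨Gc, hu, hmul, hE⟩ := htc
  rcases Nat.eq_zero_or_pos n with hn | hn
  · exact ⟨fun _ => 1, fun i => (Fin.elim0 (hn ▸ i)), fun i j => (Fin.elim0 (hn ▸ i))⟩
  · set i0 : Fin n := ⟨0, hn⟩
    have hone : ∀ i, Gc i i = 1 := by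
      intro i
      have h := hmul i i i
      exact ((hu i i).mul_left_cancel (by rw [mul_one, ← h])).symm
    refine ⟨fun i => Gc i0 i, fun i => hu i0 i, fun i j hij => ?_⟩
    have hinv : (Gc i0 i)⁻¹ = Gc i i0 := by
      apply Matrix.inv_eq_left_inv
      rw [← hmul i i0 i, hone]
    rw [hinv, ← hmul i i0 j, hE i j hij]
end

section
/- Let 𝒢=(𝒱,ℰ) be a directed graph and let {G*_ij}_{(i,j)∈ℰ} be a collection of matrices in GL(d,ℝ) that is transitively consistent for 𝒢. Then all collections {G*_i}_{i∈𝒱} of matrices in GL(d,ℝ) satisfying G*_ij = G*_i^{−1}·G*_j for all (i,j)∈ℰ are equal up to transformation from the left if and only if 𝒢 is connected. -/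
open Matrix Kronecker

/-!
If `G` and `G'` both factor the edge matrices, then `G'_i G_i⁻¹ = G'_j G_j⁻¹` along every edge, so on a
connected graph this product is a single matrix `Q` with `Q G_i = G'_i`. Conversely, transitive
consistency gives one factorization `G_i = G*_{i₀ i}`; flipping the sign of `G` off the connected
component of `i₀` gives another. A left transformation `Q` relating the two fixes `G_{i₀}`, so `Q = 1`,
and then `G_j = -G_j` would force the invertible `G_j` to vanish at any node `j` outside that component.
-/

open Relation

namespace Matrix

variable {m K : Type*} [Fintype m] [DecidableEq m]

section CommRing

variable [CommRing K]

theorem inv_neg (A : Matrix m m K) : (-A)⁻¹ = -A⁻¹ := by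
  by_cases hA : IsUnit A
  · exact inv_eq_left_inv (by rw [neg_mul_neg, nonsing_inv_mul _ ((isUnit_iff_isUnit_det A).1 hA)])
  · have hA' : ¬IsUnit (-A) := by rwa [IsUnit.neg_iff]
    rw [isUnit_iff_isUnit_det] at hA hA'
    rw [nonsing_inv_apply_not_isUnit _ hA, nonsing_inv_apply_not_isUnit _ hA', neg_zero]

theorem inv_ite_neg_mul_ite_neg (A B : Matrix m m K) {p q : Prop} [Decidable p] [Decidable q]
    (hpq : p ↔ q) : (if p then A else -A)⁻¹ * (if q then B else -B) = A⁻¹ * B := by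
  split_ifs <;> simp_all [inv_neg]

theorem mul_inv_eq_mul_inv_of_inv_mul_eq {A B A' B' : Matrix m m K} (hB : IsUnit B)
    (hA' : IsUnit A') (h : A⁻¹ * B = A'⁻¹ * B') : A' * A⁻¹ = B' * B⁻¹ := by
  have hB' : B' = A' * A⁻¹ * B := by
    rw [mul_assoc, h, ← mul_assoc, mul_nonsing_inv _ ((isUnit_iff_isUnit_det A').1 hA'), one_mul]
  rw [hB', mul_assoc _ B, mul_nonsing_inv _ ((isUnit_iff_isUnit_det B).1 hB), mul_one]

theorem eq_inv_mul_of_mul_eq {V : Type*} {Gc : V → V → Matrix m m K}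
    (hunit : ∀ i j, IsUnit (Gc i j)) (htrans : ∀ i j k, Gc i k = Gc i j * Gc j k) (i j k : V) :
    Gc i j = (Gc k i)⁻¹ * Gc k j := by
  rw [htrans k i j, ← mul_assoc, nonsing_inv_mul _ ((isUnit_iff_isUnit_det _).1 (hunit k i)),
    one_mul]

end CommRing

variable {V : Type*} {r : V → V → Prop}

theorem exists_mul_eq_of_forall_reflTransGen [CommRing K]
    (hconn : ∀ i j, ReflTransGen (fun a b => r a b ∨ r b a) i j) {G G' : V → Matrix m m K}
    (hG : ∀ i, IsUnit (G i)) (hG' : ∀ i, IsUnit (G' i))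
    (h : ∀ i j, r i j → (G i)⁻¹ * G j = (G' i)⁻¹ * G' j) :
    ∃ Q : Matrix m m K, IsUnit Q ∧ ∀ i, Q * G i = G' i := by
  cases isEmpty_or_nonempty V with
  | inl _ => exact ⟨1, isUnit_one, isEmptyElim⟩
  | inr hV =>
    obtain ⟨i₀⟩ := hV
    have hstep : ∀ a b, r a b ∨ r b a → G' a * (G a)⁻¹ = G' b * (G b)⁻¹ := by
      rintro a b (hab | hba)
      · exact mul_inv_eq_mul_inv_of_inv_mul_eq (hG b) (hG' a) (h a b hab)
      · exact (mul_inv_eq_mul_inv_of_inv_mul_eq (hG a) (hG' b) (h b a hba)).symm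
    have hconst : ∀ i, G' i₀ * (G i₀)⁻¹ = G' i * (G i)⁻¹ := fun i => by
      simpa [reflTransGen_eq_self] using (hconn i₀ i).lift (fun k => G' k * (G k)⁻¹) hstep
    refine ⟨G' i₀ * (G i₀)⁻¹, (hG' i₀).mul (isUnit_nonsing_inv_iff.2 (hG i₀)), fun i => ?_⟩
    rw [hconst i, mul_assoc, nonsing_inv_mul _ ((isUnit_iff_isUnit_det _).1 (hG i)), mul_one]

theorem reflTransGen_of_forall_exists_mul_eq [Field K] [NeZero (2 : K)] [Nonempty m]
    {G : V → Matrix m m K} (hG : ∀ i, IsUnit (G i))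
    (huniq : ∀ G' : V → Matrix m m K, (∀ i, IsUnit (G' i)) →
      (∀ i j, r i j → (G' i)⁻¹ * G' j = (G i)⁻¹ * G j) → ∃ Q : Matrix m m K, ∀ i, Q * G i = G' i)
    (i j : V) : ReflTransGen (fun a b => r a b ∨ r b a) i j := by
  classical
  by_contra hij
  set S := ReflTransGen (fun a b => r a b ∨ r b a) i
  have hS : ∀ a b, r a b → (S a ↔ S b) := fun a b hab =>
    ⟨fun ha => ha.tail (Or.inl hab), fun hb => hb.tail (Or.inr hab)⟩
  obtain ⟨Q, hQ⟩ := huniq (fun k => if S k then G k else -G k)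
    (fun k => by split_ifs; exacts [hG k, (hG k).neg])
    (fun a b hab => inv_ite_neg_mul_ite_neg _ _ (hS a b hab))
  have hQ1 : Q = 1 := (hG i).mul_eq_right.1 (by simpa [S, ReflTransGen.refl] using hQ i)
  have hGj : G j = -G j := by simpa [hQ1, hij] using hQ j
  have hGj0 : G j = 0 := by
    rwa [eq_neg_iff_add_eq_zero, ← two_smul K, smul_eq_zero, or_iff_right two_ne_zero] at hGj
  exact not_isUnit_zero (hGj0 ▸ hG j)

end Matrix

/-- all node collections factoring a transitively consistent edge collection
are equal up to left transformation iff the graph is connected. -/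
theorem stmt3 (n d : ℕ) (hd : 0 < d) (E : Finset (Fin n × Fin n))
    (Gs : Fin n → Fin n → Matrix (Fin d) (Fin d) ℝ)
    (htc : TransConsistent n d E Gs) :
    (∀ G G' : Fin n → Matrix (Fin d) (Fin d) ℝ,
        (∀ i, IsUnit (G i)) → (∀ i, IsUnit (G' i)) →
        (∀ i j, (i, j) ∈ E → Gs i j = (G i)⁻¹ * G j) →
        (∀ i j, (i, j) ∈ E → Gs i j = (G' i)⁻¹ * G' j) →
        ∃ Q : Matrix (Fin d) (Fin d) ℝ, IsUnit Q ∧ ∀ i, Q * G i = G' i)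
      ↔ UConnected n E := by
  obtain ⟨Gc, hunit, htrans, hext⟩ := htc
  constructor
  · intro huniq i₀
    have : Nonempty (Fin d) := ⟨⟨0, hd⟩⟩
    let G := fun i => Gc i₀ i
    have hGs : ∀ i j, (i, j) ∈ E → Gs i j = (G i)⁻¹ * G j := fun i j hij =>
      (hext i j hij).symm.trans (eq_inv_mul_of_mul_eq hunit htrans i j i₀)
    refine reflTransGen_of_forall_exists_mul_eq (fun i => hunit i₀ i) (fun G' hG' h => ?_) i₀
    obtain ⟨Q, -, hQ⟩ := huniq G G' (fun i => hunit i₀ i) hG' hGs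
      fun i j hij => (hGs i j hij).trans (h i j hij).symm
    exact ⟨Q, hQ⟩
  · intro hconn G G' hG hG' h h'
    exact exists_mul_eq_of_forall_reflTransGen hconn hG hG'
      fun i j hij => (h i j hij).symm.trans (h' i j hij)
end

section
/- Let 𝒢=(𝒱,ℰ) be a directed graph and let {G*_ij}_{(i,j)∈ℰ} be a collection of matrices in GL(d,ℝ) that is transitively consistent for 𝒢. Then there is a unique collection {G*_ij}_{(i,j)∈𝒱×𝒱} ⊇ {G*_ij}_{(i,j)∈ℰ} of matrices in GL(d,ℝ) that is transitively consistent for the complete graph if and only if all collections {G*_i}_{i∈𝒱} of matrices in GL(d,ℝ) satisfying G*_ij = G*_i^{−1}·G*_j for all (i,j)∈ℰ are equal up to transformation from the left. -/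
open Matrix Kronecker

lemma mulinv' {d : ℕ} {M : Matrix (Fin d) (Fin d) ℝ} (h : IsUnit M) : M * M⁻¹ = 1 :=
  Matrix.mul_nonsing_inv _ ((Matrix.isUnit_iff_isUnit_det _).mp h)

lemma invmul' {d : ℕ} {M : Matrix (Fin d) (Fin d) ℝ} (h : IsUnit M) : M⁻¹ * M = 1 :=
  Matrix.nonsing_inv_mul _ ((Matrix.isUnit_iff_isUnit_det _).mp h)

lemma diag_one {n d : ℕ} {Gc : Fin n → Fin n → Matrix (Fin d) (Fin d) ℝ}
    (h1 : ∀ i j, IsUnit (Gc i j)) (h2 : ∀ i j k, Gc i k = Gc i j * Gc j k) (i : Fin n) :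
    Gc i i = 1 := by
  have h := h2 i i i
  calc Gc i i = (Gc i i)⁻¹ * (Gc i i * Gc i i) := by
        rw [← mul_assoc, invmul' (h1 i i), one_mul]
    _ = (Gc i i)⁻¹ * Gc i i := by rw [← h]
    _ = 1 := invmul' (h1 i i)

lemma inv_eq_rev {n d : ℕ} {Gc : Fin n → Fin n → Matrix (Fin d) (Fin d) ℝ}
    (h1 : ∀ i j, IsUnit (Gc i j)) (h2 : ∀ i j k, Gc i k = Gc i j * Gc j k) (c i : Fin n) :
    (Gc c i)⁻¹ = Gc i c :=
  Matrix.inv_eq_left_inv (by rw [← h2 i c i, diag_one h1 h2])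

/-- uniqueness of the transitively consistent extension to the complete graph
holds iff all factoring node collections are equal up to left transformation. -/
theorem stmt4 (n d : ℕ) (E : Finset (Fin n × Fin n))
    (Gs : Fin n → Fin n → Matrix (Fin d) (Fin d) ℝ)
    (htc : TransConsistent n d E Gs) :
    (∃! Gc : Fin n → Fin n → Matrix (Fin d) (Fin d) ℝ,
        (∀ i j, IsUnit (Gc i j)) ∧ (∀ i j k, Gc i k = Gc i j * Gc j k) ∧
        (∀ i j, (i, j) ∈ E → Gc i j = Gs i j))
      ↔ (∀ G G' : Fin n → Matrix (Fin d) (Fin d) ℝ,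
        (∀ i, IsUnit (G i)) → (∀ i, IsUnit (G' i)) →
        (∀ i j, (i, j) ∈ E → Gs i j = (G i)⁻¹ * G j) →
        (∀ i j, (i, j) ∈ E → Gs i j = (G' i)⁻¹ * G' j) →
        ∃ Q : Matrix (Fin d) (Fin d) ℝ, IsUnit Q ∧ ∀ i, Q * G i = G' i) := by
  constructor
  · rintro ⟨Gc, _, huniq⟩ G G' hG hG' hfac hfac'
    have key : ∀ (H : Fin n → Matrix (Fin d) (Fin d) ℝ), (∀ i, IsUnit (H i)) →
        (∀ i j, (i, j) ∈ E → Gs i j = (H i)⁻¹ * H j) →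
        (fun i j => (H i)⁻¹ * H j) = Gc := by
      intro H hH hf
      refine huniq _ ⟨fun i j => (Matrix.isUnit_nonsing_inv_iff.mpr (hH i)).mul (hH j),
        fun i j k => ?_, fun i j hij => (hf i j hij).symm⟩
      show (H i)⁻¹ * H k = ((H i)⁻¹ * H j) * ((H j)⁻¹ * H k)
      rw [mul_assoc, ← mul_assoc (H j), mulinv' (hH j), one_mul]
    have heq : ∀ i j, (G i)⁻¹ * G j = (G' i)⁻¹ * G' j := by
      intro i j
      have := (key G hG hfac).trans (key G' hG' hfac').symm
      exact congrFun (congrFun this i) j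
    rcases Nat.eq_zero_or_pos n with hn | hn
    · exact ⟨1, isUnit_one, fun i => (by subst hn; exact i.elim0)⟩
    · set c : Fin n := ⟨0, hn⟩
      refine ⟨G' c * (G c)⁻¹, (hG' c).mul (Matrix.isUnit_nonsing_inv_iff.mpr (hG c)),
        fun i => ?_⟩
      rw [mul_assoc, heq c i, ← mul_assoc, mulinv' (hG' c), one_mul]
  · intro hleft
    obtain ⟨Gc, h1, h2, h3⟩ := htc
    refine ⟨Gc, ⟨h1, h2, h3⟩, ?_⟩
    rintro Gc' ⟨h1', h2', h3'⟩
    rcases Nat.eq_zero_or_pos n with hn | hn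
    · funext i; subst hn; exact i.elim0
    set c : Fin n := ⟨0, hn⟩
    obtain ⟨Q, hQ, hQeq⟩ := hleft (fun i => Gc' c i) (fun i => Gc c i)
      (fun i => h1' c i) (fun i => h1 c i)
      (fun i j hij => by
        rw [← h3' i j hij, inv_eq_rev h1' h2' c i, ← h2' i c j])
      (fun i j hij => by
        rw [← h3 i j hij, inv_eq_rev h1 h2 c i, ← h2 i c j])
    have hQ1 : Q = 1 := by
      have := hQeq c
      simpa [diag_one h1' h2' c, diag_one h1 h2 c] using this
    have hcol : ∀ i, Gc' c i = Gc c i := fun i => by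
      have := hQeq i; rwa [hQ1, one_mul] at this
    funext i j
    rw [h2' i c j, h2 i c j, ← inv_eq_rev h1' h2' c i, ← inv_eq_rev h1 h2 c i,
      hcol i, hcol j]
end

section
/- If the quasi-strongly connected directed graph 𝒢=(𝒱,ℰ) is a spanning tree (a QSC graph with exactly n−1 edges, containing a center), then every collection {G_ij}_{(i,j)∈ℰ} of matrices in GL(d,ℝ) is transitively consistent for 𝒢. -/
open Matrix Kronecker

/-- every edge collection of invertible matrices on a spanning tree
(a QSC graph with exactly `n-1` edges) is transitively consistent. -/
theorem stmt8 (n d : ℕ) (E : Finset (Fin n × Fin n))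
    (hqsc : QSC n E) (hcard : E.card = n - 1)
    (G : Fin n → Fin n → Matrix (Fin d) (Fin d) ℝ)
    (hG : ∀ i j, (i, j) ∈ E → IsUnit (G i j)) :
    TransConsistent n d E G := by
  classical
  obtain ⟨c, hc⟩ := hqsc
  -- out-degree
  set out : Fin n → ℕ := fun i => (E.filter fun e => e.1 = i).card with hout
  have hsum : ∑ i : Fin n, out i = n - 1 := by
    rw [← hcard]
    exact (Finset.card_eq_sum_card_fiberwise (f := Prod.fst)
      (fun e _ => Finset.mem_univ e.1)).symm
  have hstep : ∀ i : Fin n, i ≠ c → ∃ j, (i, j) ∈ E := by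
    intro i hi
    rcases (hc i).cases_head with h | ⟨b, hb, _⟩
    · exact absurd h hi
    · exact ⟨b, hb⟩
  have hge : ∀ i ∈ Finset.univ.erase c, 1 ≤ out i := by
    intro i hi
    obtain ⟨j, hj⟩ := hstep i (Finset.ne_of_mem_erase hi)
    have : (i, j) ∈ E.filter fun e => e.1 = i := by
      simp [Finset.mem_filter, hj]
    exact Finset.card_pos.mpr ⟨_, this⟩
  have hsplit : ∑ i ∈ Finset.univ.erase c, out i + out c = ∑ i : Fin n, out i :=
    Finset.sum_erase_add _ _ (Finset.mem_univ c)
  have hcard' : (Finset.univ.erase c).card = n - 1 := by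
    simp [Finset.card_erase_of_mem]
  have hle : n - 1 ≤ ∑ i ∈ Finset.univ.erase c, out i := by
    calc n - 1 = ∑ _i ∈ Finset.univ.erase c, 1 := by simp [hcard']
    _ ≤ ∑ i ∈ Finset.univ.erase c, out i := Finset.sum_le_sum hge
  have houtc : out c = 0 := by omega
  have hsumerase : ∑ i ∈ Finset.univ.erase c, out i = n - 1 := by omega
  have hout1 : ∀ i : Fin n, i ≠ c → out i = 1 := by
    intro i hi
    have := (Finset.sum_eq_sum_iff_of_le hge).mp
      (by rw [hsumerase]; simp [hcard'])
    exact (this i (Finset.mem_erase.mpr ⟨hi, Finset.mem_univ i⟩)).symm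
  have hnoc : ∀ j : Fin n, (c, j) ∉ E := by
    intro j hj
    have : (c, j) ∈ E.filter fun e => e.1 = c := by simp [Finset.mem_filter, hj]
    have hpos := Finset.card_pos.mpr ⟨_, this⟩
    simp only [hout] at houtc
    omega
  have huniq : ∀ i j j' : Fin n, (i, j) ∈ E → (i, j') ∈ E → j = j' := by
    intro i j j' hj hj'
    have hi : i ≠ c := fun h => hnoc j (h ▸ hj)
    have h1 : (i, j) ∈ E.filter fun e => e.1 = i := by simp [Finset.mem_filter, hj]
    have h2 : (i, j') ∈ E.filter fun e => e.1 = i := by simp [Finset.mem_filter, hj']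
    have := Finset.card_le_one.mp (le_of_eq (hout1 i hi)) _ h1 _ h2
    exact congrArg Prod.snd this
  -- the successor function
  have hex : ∀ i : Fin n, ∃ j, i ≠ c → (i, j) ∈ E := by
    intro i
    by_cases hi : i = c
    · exact ⟨c, fun h => absurd hi h⟩
    · obtain ⟨j, hj⟩ := hstep i hi; exact ⟨j, fun _ => hj⟩
  choose f hf using hex
  -- every node reaches c by iterating f
  have hreach : ∀ i : Fin n, ∃ k, f^[k] i = c := by
    intro i
    induction hc i using Relation.ReflTransGen.head_induction_on with
    | refl => exact ⟨0, rfl⟩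
    | head hab _ ih =>
      rename_i a b _
      obtain ⟨k, hk⟩ := ih
      have ha : a ≠ c := fun h => hnoc b (h ▸ hab)
      have hb : b = f a := huniq a b (f a) hab (hf a ha)
      exact ⟨k + 1, by rw [Function.iterate_succ_apply, ← hb, hk]⟩
  set dep : Fin n → ℕ := fun i => Nat.find (hreach i) with hdep
  have hdepc : dep c = 0 := Nat.le_zero.mp (Nat.find_le rfl)
  have hdeps : ∀ i : Fin n, i ≠ c → dep i = dep (f i) + 1 := by
    intro i hi
    have hpos : 0 < dep i := by
      rcases Nat.eq_zero_or_pos (dep i) with h | h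
      · exact absurd (h ▸ Nat.find_spec (hreach i) : f^[0] i = c) hi
      · exact h
    have hle1 : dep (f i) ≤ dep i - 1 := by
      apply Nat.find_le
      have : f^[dep i - 1 + 1] i = c := by
        rw [Nat.sub_add_cancel hpos]; exact Nat.find_spec (hreach i)
      rwa [Function.iterate_succ_apply] at this
    have hle2 : dep i ≤ dep (f i) + 1 := by
      apply Nat.find_le
      rw [Function.iterate_succ_apply]
      exact Nat.find_spec (hreach (f i))
    omega
  -- the potential
  obtain ⟨P, hP⟩ : ∃ P : Fin n → Matrix (Fin d) (Fin d) ℝ,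
      P = fun i => ((List.range (dep i)).map
        fun t => G (f^[t] i) (f^[t + 1] i)).prod := ⟨_, rfl⟩
  have hPc : P c = 1 := by simp [hP, hdepc]
  have hPrec : ∀ i : Fin n, i ≠ c → P i = G i (f i) * P (f i) := by
    intro i hi
    rw [hP]
    simp only
    rw [hdeps i hi, List.range_succ_eq_map, List.map_cons, List.prod_cons,
      List.map_map]
    have h1 : ((fun t => G (f^[t] i) (f^[t + 1] i)) ∘ Nat.succ)
        = fun t => G (f^[t] (f i)) (f^[t + 1] (f i)) := by
      funext t
      simp [Function.comp, Function.iterate_succ_apply]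
    rw [h1]
    simp
  have hPu : ∀ m : ℕ, ∀ i : Fin n, dep i = m → IsUnit (P i) := by
    intro m
    induction m using Nat.strong_induction_on with
    | _ m ih =>
      intro i hm
      by_cases hi : i = c
      · subst hi; rw [hPc]; exact isUnit_one
      · rw [hPrec i hi]
        have hlt : dep (f i) < m := by rw [← hm, hdeps i hi]; omega
        exact (hG _ _ (hf i hi)).mul (ih (dep (f i)) hlt (f i) rfl)
  have hPu' : ∀ i, IsUnit (P i) := fun i => hPu (dep i) i rfl
  have hdet : ∀ i, IsUnit (P i).det := fun i =>
    (Matrix.isUnit_iff_isUnit_det _).mp (hPu' i)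
  refine ⟨fun i j => P i * (P j)⁻¹, ?_, ?_, ?_⟩
  · intro i j
    exact (hPu' i).mul ((Matrix.isUnit_nonsing_inv_iff).mpr (hPu' j))
  · intro i j k
    rw [mul_assoc, ← mul_assoc (P j)⁻¹, Matrix.nonsing_inv_mul _ (hdet j), one_mul]
  · intro i j hij
    show P i * (P j)⁻¹ = G i j
    have hi : i ≠ c := fun h => hnoc j (h ▸ hij)
    have hj : j = f i := huniq i j (f i) hij (hf i hi)
    rw [hPrec i hi, ← hj, mul_assoc, Matrix.mul_nonsing_inv _ (hdet j), mul_one]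
end

section
/- Let 𝒢=(𝒱,ℰ) be a directed graph and let {G_ij}_{(i,j)∈ℰ} be a collection of matrices with G_ijᵀ·G_ij = I_d for all (i,j)∈ℰ (orthogonal matrices). For x₀ ∈ ℝ^{nd}, partition x(t) = exp(−t·Z(𝒢,{G_ij}))·x₀ into blocks x_1(t),…,x_n(t) ∈ ℝ^d. Then the function t ↦ max_i ‖x_i(t)‖² is nonincreasing on [0,∞); in particular, for every ε>0 there exists δ>0 such that ‖x₀‖ < δ implies ‖x(t)‖ < ε for all t ≥ 0 (i.e., −Z(𝒢,{G_ij}) is critically stable). -/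
open Matrix Kronecker

/-!
Measure a block vector `x = (x_1, …, x_n)` by `‖x‖_B = max_i ‖x_i‖`, the sup norm of
`Fin n → EuclideanSpace ℝ (Fin d)`. With `c = |E|`, block row `i` of `c • 1 - Z` consists of
`(c - |N_i|) • 1` on the diagonal and at most `|N_i|` orthogonal blocks, so `‖c • 1 - Z‖_B ≤ c`.
Hence `exp (-t Z) = e^{-tc} exp (t (c • 1 - Z))` has `B`-operator norm at most `e^{-tc} e^{tc} = 1`,
and by the semigroup law `t ↦ ‖x(t)‖_B` is nonincreasing. Stability follows from
`‖x‖_B ≤ ‖x‖₂ ≤ √n ‖x‖_B`.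
-/

namespace NormedSpace

section RealBanachAlgebra

variable {𝔸 : Type*} [NormedRing 𝔸] [NormedAlgebra ℝ 𝔸]

theorem norm_exp_le_exp_norm_of_norm_one_le (h1 : ‖(1 : 𝔸)‖ ≤ 1) (x : 𝔸) :
    ‖exp x‖ ≤ Real.exp ‖x‖ := by
  rw [exp_eq_tsum ℝ, Real.exp_eq_exp_ℝ]
  refine tsum_of_norm_bounded (exp_series_hasSum_exp' (𝕂 := ℝ) ‖x‖) fun k => ?_
  have hpow : ‖x ^ k‖ ≤ ‖x‖ ^ k := by
    rcases k.eq_zero_or_pos with rfl | hk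
    · simpa using h1
    · exact norm_pow_le' x hk
  rw [norm_smul, smul_eq_mul, Real.norm_of_nonneg (by positivity)]
  gcongr

variable [CompleteSpace 𝔸]

-- `exp_add_of_commute` asks for `NormedAlgebra ℚ 𝔸`, which `V →L[ℝ] V` does not carry.
theorem exp_add_of_commute_real {x y : 𝔸} (hxy : Commute x y) :
    exp (x + y) = exp x * exp y :=
  exp_add_of_commute_of_mem_ball (𝕂 := ℝ) hxy
    ((expSeries_radius_eq_top ℝ 𝔸).symm ▸ edist_lt_top _ _)
    ((expSeries_radius_eq_top ℝ 𝔸).symm ▸ edist_lt_top _ _)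

theorem norm_exp_neg_smul_le_one (h1 : ‖(1 : 𝔸)‖ ≤ 1) {z : 𝔸} {c t : ℝ}
    (hz : ‖c • 1 - z‖ ≤ c) (ht : 0 ≤ t) : ‖exp (-t • z)‖ ≤ 1 := by
  have hsplit : -t • z = algebraMap ℝ 𝔸 (-(t * c)) + t • (c • 1 - z) := by
    rw [Algebra.algebraMap_eq_smul_one]; module
  rw [hsplit, exp_add_of_commute_real (Algebra.commutes _ _), ← algebraMap_exp_comm,
    ← Algebra.smul_def, ← Real.exp_eq_exp_ℝ]
  calc ‖Real.exp (-(t * c)) • exp (t • (c • 1 - z))‖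
      ≤ Real.exp (-(t * c)) * Real.exp ‖t • (c • 1 - z)‖ := by
        rw [norm_smul, Real.norm_of_nonneg (Real.exp_pos _).le]
        gcongr
        exact norm_exp_le_exp_norm_of_norm_one_le h1 _
    _ ≤ Real.exp (-(t * c)) * Real.exp (t * c) := by
        rw [norm_smul, Real.norm_of_nonneg ht]
        gcongr
    _ = 1 := by rw [← Real.exp_add, neg_add_cancel, Real.exp_zero]

end RealBanachAlgebra

theorem antitoneOn_norm_exp_neg_smul_apply {V : Type*} [NormedAddCommGroup V]
    [NormedSpace ℝ V] [CompleteSpace V] {z : V →L[ℝ] V} {c : ℝ} (hz : ‖c • 1 - z‖ ≤ c) (v : V) :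
    AntitoneOn (fun t : ℝ => ‖exp (-t • z) v‖) (Set.Ici 0) := by
  intro s hs t _ hst
  have hsplit : -t • z = -(t - s) • z + -s • z := by module
  dsimp only
  rw [hsplit, exp_add_of_commute_real (((Commute.refl z).smul_left _).smul_right _)]
  calc _ ≤ ‖exp (-(t - s) • z)‖ * ‖exp (-s • z) v‖ := ContinuousLinearMap.le_opNorm _ _
    _ ≤ _ := mul_le_of_le_one_left (norm_nonneg _)
        (norm_exp_neg_smul_le_one ContinuousLinearMap.norm_id_le hz (sub_nonneg.2 hst))

end NormedSpace

theorem pi_norm_sq_eq_iSup_norm_sq {ι : Type*} [Fintype ι] {E : ι → Type*}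
    [∀ i, SeminormedAddGroup (E i)] (f : ∀ i, E i) : ‖f‖ ^ 2 = ⨆ i, ‖f i‖ ^ 2 := by
  have hbdd : BddAbove (Set.range fun i => ‖f i‖ ^ 2) := (Set.finite_range _).bddAbove
  have hS : 0 ≤ ⨆ i, ‖f i‖ ^ 2 := Real.iSup_nonneg fun i => sq_nonneg _
  refine le_antisymm ?_ (Real.iSup_le (fun i => by gcongr; exact norm_le_pi_norm f i) (sq_nonneg _))
  have hf : ‖f‖ ≤ √(⨆ i, ‖f i‖ ^ 2) := (pi_norm_le_iff_of_nonneg (Real.sqrt_nonneg _)).2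
    fun i => Real.le_sqrt_of_sq_le (le_ciSup hbdd i)
  calc ‖f‖ ^ 2 ≤ √(⨆ i, ‖f i‖ ^ 2) ^ 2 := by gcongr
    _ = _ := Real.sq_sqrt hS

section Blocks

variable {ι κ : Type*}

def toBlocks : (ι × κ → ℝ) ≃ₗ[ℝ] (ι → EuclideanSpace ℝ κ) :=
  (LinearEquiv.curry ℝ ℝ ι κ).trans
    (LinearEquiv.piCongrRight fun _ => (WithLp.linearEquiv 2 ℝ (κ → ℝ)).symm)

@[simp]
theorem ofLp_toBlocks_apply (x : ι × κ → ℝ) (i : ι) (a : κ) : (toBlocks x i).ofLp a = x (i, a) :=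
  rfl

variable [Fintype κ]

theorem norm_toBlocks_apply_sq (x : ι × κ → ℝ) (i : ι) :
    ‖toBlocks x i‖ ^ 2 = ∑ a, x (i, a) ^ 2 := by
  simp [EuclideanSpace.norm_sq_eq]

variable [Fintype ι]

theorem norm_toBlocks_sq (x : ι × κ → ℝ) : ‖toBlocks x‖ ^ 2 = ⨆ i, ∑ a, x (i, a) ^ 2 := by
  simp only [pi_norm_sq_eq_iSup_norm_sq, norm_toBlocks_apply_sq]

theorem euclNorm_eq_sqrt_sum_norm_toBlocks_sq (x : ι × κ → ℝ) :
    euclNorm x = √(∑ i, ‖toBlocks x i‖ ^ 2) := by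
  simp only [euclNorm, Fintype.sum_prod_type, norm_toBlocks_apply_sq]

theorem norm_toBlocks_le_euclNorm (x : ι × κ → ℝ) : ‖toBlocks x‖ ≤ euclNorm x := by
  rw [euclNorm_eq_sqrt_sum_norm_toBlocks_sq]
  refine (pi_norm_le_iff_of_nonneg (Real.sqrt_nonneg _)).2 fun i => Real.le_sqrt_of_sq_le ?_
  exact Finset.single_le_sum (f := fun j => ‖toBlocks x j‖ ^ 2) (fun j _ => sq_nonneg _)
    (Finset.mem_univ i)

theorem euclNorm_le_sqrt_card_mul_norm_toBlocks (x : ι × κ → ℝ) :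
    euclNorm x ≤ √(Fintype.card ι) * ‖toBlocks x‖ := by
  rw [euclNorm_eq_sqrt_sum_norm_toBlocks_sq, ← Real.sqrt_sq (norm_nonneg (toBlocks x)),
    ← Real.sqrt_mul (Nat.cast_nonneg _)]
  gcongr
  calc ∑ i, ‖toBlocks x i‖ ^ 2 ≤ ∑ _i : ι, ‖toBlocks x‖ ^ 2 := by
        gcongr with i; exact norm_le_pi_norm _ i
    _ = _ := by simp

variable [DecidableEq ι] [DecidableEq κ]

noncomputable def blockCLM : Matrix (ι × κ) (ι × κ) ℝ →ₐ[ℝ]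
    ((ι → EuclideanSpace ℝ κ) →L[ℝ] (ι → EuclideanSpace ℝ κ)) :=
  AlgHom.ofLinearMap
    (LinearMap.toContinuousLinearMap.toLinearMap ∘ₗ
      ((toBlocks.conjAlgEquiv ℝ).toLinearMap ∘ₗ Matrix.toLin'.toLinearMap))
    (by ext; simp) (by intro M N; ext; simp)

theorem blockCLM_apply_toBlocks (M : Matrix (ι × κ) (ι × κ) ℝ) (x : ι × κ → ℝ) :
    blockCLM M (toBlocks x) = toBlocks (M *ᵥ x) := by
  simp [blockCLM]

theorem blockCLM_exp (M : Matrix (ι × κ) (ι × κ) ℝ) :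
    blockCLM (NormedSpace.exp M) = NormedSpace.exp (blockCLM M) := by
  -- any algebra norm inducing the product topology will do
  let _ : NormedRing (Matrix (ι × κ) (ι × κ) ℝ) := Matrix.linftyOpNormedRing
  let _ : NormedAlgebra ℝ (Matrix (ι × κ) (ι × κ) ℝ) := Matrix.linftyOpNormedAlgebra
  exact NormedSpace.map_exp_of_mem_ball (𝕂 := ℝ) blockCLM
    (LinearMap.continuous_of_finiteDimensional (blockCLM (ι := ι) (κ := κ)).toLinearMap) M
    ((NormedSpace.expSeries_radius_eq_top ℝ (Matrix (ι × κ) (ι × κ) ℝ)).symm ▸ edist_lt_top _ _)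

theorem toBlocks_exp_mulVec (M : Matrix (ι × κ) (ι × κ) ℝ) (x : ι × κ → ℝ) :
    toBlocks (NormedSpace.exp M *ᵥ x) = NormedSpace.exp (blockCLM M) (toBlocks x) := by
  rw [← blockCLM_apply_toBlocks, blockCLM_exp]

end Blocks

theorem norm_toEuclideanLin_of_transpose_mul_self {κ : Type*} [Fintype κ] [DecidableEq κ]
    {M : Matrix κ κ ℝ} (hM : Mᵀ * M = 1) (v : EuclideanSpace ℝ κ) :
    ‖toEuclideanLin M v‖ = ‖v‖ := by
  have hsq : ‖toEuclideanLin M v‖ ^ 2 = ‖v‖ ^ 2 := by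
    rw [← real_inner_self_eq_norm_sq, ← real_inner_self_eq_norm_sq,
      EuclideanSpace.inner_eq_star_dotProduct, EuclideanSpace.inner_eq_star_dotProduct,
      ofLp_toLpLin, toLin'_apply, star_trivial, star_trivial]
    calc (M *ᵥ v.ofLp) ⬝ᵥ (M *ᵥ v.ofLp) = (Mᵀ *ᵥ (M *ᵥ v.ofLp)) ⬝ᵥ v.ofLp := by
          rw [dotProduct_mulVec, mulVec_transpose]
      _ = v.ofLp ⬝ᵥ v.ofLp := by rw [mulVec_mulVec, hM, one_mulVec]
  exact (pow_left_inj₀ (norm_nonneg _) (norm_nonneg _) two_ne_zero).1 hsq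

theorem toBlocks_Zmat_mulVec_apply {n d : ℕ} (E : Finset (Fin n × Fin n))
    (G : Fin n → Fin n → Matrix (Fin d) (Fin d) ℝ) (x : Fin n × Fin d → ℝ) (i : Fin n) :
    toBlocks (Zmat n d E G *ᵥ x) i =
      ((E.filter fun e => e.1 = i).card : ℝ) • toBlocks x i -
        ∑ j with j ≠ i ∧ (i, j) ∈ E, toEuclideanLin (G i j) (toBlocks x j) := by
  ext a
  simp only [ofLp_toBlocks_apply, mulVec, dotProduct, Fintype.sum_prod_type, WithLp.ofLp_sub,
    WithLp.ofLp_smul, WithLp.ofLp_sum, Pi.sub_apply, Pi.smul_apply, Finset.sum_apply,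
    ofLp_toLpLin, toLin'_apply, smul_eq_mul]
  have hcol : ∀ j, ∑ b, Zmat n d E G (i, a) (j, b) * x (j, b) =
      (if i = j then ((E.filter fun e => e.1 = i).card : ℝ) * x (i, a) else 0) -
        if j ≠ i ∧ (i, j) ∈ E then ∑ b, G i j a b * x (j, b) else 0 := by
    intro j
    by_cases hij : i = j
    · subst hij
      simp [Zmat]
    · by_cases hE : (i, j) ∈ E <;> simp [Zmat, hij, Ne.symm hij, hE]
  simp only [hcol, Finset.sum_sub_distrib, Finset.sum_ite_eq, Finset.mem_univ, if_true,
    Finset.sum_filter]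

theorem card_filter_ne_and_mem_le_card_filter_fst_eq {α : Type*} [Fintype α] [DecidableEq α]
    (E : Finset (α × α)) (i : α) :
    (Finset.univ.filter fun j => j ≠ i ∧ (i, j) ∈ E).card ≤ (E.filter fun e => e.1 = i).card :=
  Finset.card_le_card_of_injOn (fun j => (i, j)) (fun j hj => by simp_all)
    (fun _ _ _ _ h => (Prod.mk.inj h).2)

theorem norm_smul_one_sub_blockCLM_Zmat_le {n d : ℕ} (E : Finset (Fin n × Fin n))
    (G : Fin n → Fin n → Matrix (Fin d) (Fin d) ℝ)
    (hG : ∀ i j, (i, j) ∈ E → (G i j)ᵀ * G i j = 1) :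
    ‖(E.card : ℝ) • 1 - blockCLM (Zmat n d E G)‖ ≤ E.card := by
  refine ContinuousLinearMap.opNorm_le_bound _ (Nat.cast_nonneg _) fun v => ?_
  obtain ⟨x, rfl⟩ := toBlocks.surjective v
  refine (pi_norm_le_iff_of_nonneg (by positivity)).2 fun i => ?_
  set T := Finset.univ.filter fun j => j ≠ i ∧ (i, j) ∈ E
  set deg : ℝ := ((E.filter fun e => e.1 = i).card : ℝ)
  have hT : (T.card : ℝ) ≤ deg := Nat.cast_le.2 (card_filter_ne_and_mem_le_card_filter_fst_eq E i)
  have hdeg : deg ≤ E.card := Nat.cast_le.2 (Finset.card_filter_le _ _)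
  have hblock : ((E.card : ℝ) • 1 - blockCLM (Zmat n d E G)) (toBlocks x) i =
      ((E.card : ℝ) - deg) • toBlocks x i + ∑ j ∈ T, toEuclideanLin (G i j) (toBlocks x j) := by
    rw [_root_.sub_apply, blockCLM_apply_toBlocks, Pi.sub_apply, toBlocks_Zmat_mulVec_apply]
    simp only [_root_.smul_apply, one_apply_eq_self, Pi.smul_apply]
    module
  rw [hblock]
  calc _ ≤ ((E.card : ℝ) - deg) * ‖toBlocks x‖ + ∑ j ∈ T, ‖toBlocks x‖ := by
        refine norm_add_le_of_le ?_ (norm_sum_le_of_le _ fun j hj => ?_)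
        · rw [norm_smul, Real.norm_of_nonneg (by linarith)]
          gcongr
          exact norm_le_pi_norm _ i
        · rw [norm_toEuclideanLin_of_transpose_mul_self (hG i j (Finset.mem_filter.1 hj).2.2)]
          exact norm_le_pi_norm _ j
    _ ≤ _ := by
        rw [Finset.sum_const, nsmul_eq_mul]
        nlinarith [norm_nonneg (toBlocks x)]

theorem antitoneOn_norm_toBlocks_exp_neg_smul_Zmat_mulVec {n d : ℕ} (E : Finset (Fin n × Fin n))
    (G : Fin n → Fin n → Matrix (Fin d) (Fin d) ℝ)
    (hG : ∀ i j, (i, j) ∈ E → (G i j)ᵀ * G i j = 1) (x₀ : Fin n × Fin d → ℝ) :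
    AntitoneOn (fun t : ℝ => ‖toBlocks (NormedSpace.exp (-t • Zmat n d E G) *ᵥ x₀)‖)
      (Set.Ici 0) := by
  simp only [toBlocks_exp_mulVec, map_smul]
  exact NormedSpace.antitoneOn_norm_exp_neg_smul_apply
    (norm_smul_one_sub_blockCLM_Zmat_le E G hG) _

theorem stmt10_general (n d : ℕ) (E : Finset (Fin n × Fin n))
    (G : Fin n → Fin n → Matrix (Fin d) (Fin d) ℝ)
    (hG : ∀ i j, (i, j) ∈ E → (G i j)ᵀ * G i j = 1) :
    (∀ x₀ : Fin n × Fin d → ℝ, ∀ s t : ℝ, 0 ≤ s → s ≤ t →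
      (⨆ i : Fin n, ∑ a : Fin d,
        ((NormedSpace.exp (-t • Zmat n d E G)).mulVec x₀ (i, a)) ^ 2) ≤
      (⨆ i : Fin n, ∑ a : Fin d,
        ((NormedSpace.exp (-s • Zmat n d E G)).mulVec x₀ (i, a)) ^ 2)) ∧
    (∀ ε : ℝ, 0 < ε → ∃ δ : ℝ, 0 < δ ∧ ∀ x₀ : Fin n × Fin d → ℝ, euclNorm x₀ < δ →
      ∀ t : ℝ, 0 ≤ t →
        euclNorm ((NormedSpace.exp (-t • Zmat n d E G)).mulVec x₀) < ε) := by
  have hanti := antitoneOn_norm_toBlocks_exp_neg_smul_Zmat_mulVec E G hG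
  refine ⟨fun x₀ s t hs hst => ?_,
    fun ε hε => ⟨ε / (√n + 1), by positivity, fun x₀ hx₀ t ht => ?_⟩⟩
  · rw [← norm_toBlocks_sq, ← norm_toBlocks_sq]
    gcongr
    exact hanti x₀ hs (Set.mem_Ici.2 (hs.trans hst)) hst
  · have hbound : ‖toBlocks (NormedSpace.exp (-t • Zmat n d E G) *ᵥ x₀)‖ ≤ euclNorm x₀ := by
      have h0 := hanti x₀ (Set.mem_Ici.2 le_rfl) ht ht
      simp only [neg_zero, zero_smul, NormedSpace.exp_zero, one_mulVec] at h0
      exact h0.trans (norm_toBlocks_le_euclNorm x₀)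
    calc _ ≤ √n * ‖toBlocks (NormedSpace.exp (-t • Zmat n d E G) *ᵥ x₀)‖ := by
          simpa only [Fintype.card_fin] using
            euclNorm_le_sqrt_card_mul_norm_toBlocks (ι := Fin n) (κ := Fin d) _
      _ ≤ √n * (ε / (√n + 1)) := by gcongr; exact hbound.trans hx₀.le
      _ < ε := by
          rw [mul_div_assoc', div_lt_iff₀ (by positivity)]
          nlinarith [Real.sqrt_nonneg n]

/-- for orthogonal edge matrices, along solutions `x(t) = exp(-tZ)x₀` of
`ẋ = -Zx` the function `t ↦ max_i ‖x_i(t)‖²` is nonincreasing on `[0,∞)`; in particular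
`-Z` is critically stable. -/
theorem stmt10 (n d : ℕ) (hn : 0 < n) (E : Finset (Fin n × Fin n))
    (G : Fin n → Fin n → Matrix (Fin d) (Fin d) ℝ)
    (hG : ∀ i j, (i, j) ∈ E → (G i j)ᵀ * G i j = 1) :
    (∀ x₀ : Fin n × Fin d → ℝ, ∀ s t : ℝ, 0 ≤ s → s ≤ t →
      (⨆ i : Fin n, ∑ a : Fin d,
        ((NormedSpace.exp (-t • Zmat n d E G)).mulVec x₀ (i, a)) ^ 2) ≤
      (⨆ i : Fin n, ∑ a : Fin d,
        ((NormedSpace.exp (-s • Zmat n d E G)).mulVec x₀ (i, a)) ^ 2)) ∧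
    (∀ ε : ℝ, 0 < ε → ∃ δ : ℝ, 0 < δ ∧ ∀ x₀ : Fin n × Fin d → ℝ, euclNorm x₀ < δ →
      ∀ t : ℝ, 0 ≤ t →
        euclNorm ((NormedSpace.exp (-t • Zmat n d E G)).mulVec x₀) < ε) :=
  stmt10_general n d E G hG
end

section
/- Let 𝒢=(𝒱,ℰ) be a quasi-strongly connected directed graph and let {G_ij}_{(i,j)∈ℰ} be a collection of matrices with G_ijᵀ·G_ij = I_d for all (i,j)∈ℰ. Then every eigenvalue of Z(𝒢,{G_ij}) that lies on the imaginary axis (has zero real part) is equal to zero. -/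
open Matrix Kronecker

/-!
A block version of Gershgorin's theorem. Let `v` be an eigenvector for `μ` and `v_i` a block of
largest Euclidean norm. The `i`-th block row of `Z v = μ v` reads
`(|N_i| - μ) v_i = ∑_{j ∈ N_i, j ≠ i} G_ij v_j`, and each `G_ij` is an isometry, so the right
side has norm at most `|N_i| ‖v_i‖`. Hence `|N_i - μ| ≤ |N_i|`, and this disc meets the
imaginary axis only at `0`.
-/

open Finset

theorem Matrix.exists_mulVec_eq_smul_of_mem_spectrum {K ι : Type*} [Field K] [Fintype ι]
    [DecidableEq ι] {A : Matrix ι ι K} {μ : K} (h : μ ∈ spectrum K A) :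
    ∃ v ≠ 0, A *ᵥ v = μ • v := by
  rw [← spectrum_toLin', ← Module.End.hasEigenvalue_iff_mem_spectrum] at h
  obtain ⟨v, hv⟩ := h.exists_hasEigenvector
  exact ⟨v, hv.2, by simpa using hv.apply_eq_smul⟩

theorem Matrix.norm_toLp_mulVec_of_mem_unitaryGroup {𝕜 ι : Type*} [RCLike 𝕜] [Fintype ι]
    [DecidableEq ι] {U : Matrix ι ι 𝕜} (hU : U ∈ unitaryGroup ι 𝕜) (x : ι → 𝕜) :
    ‖WithLp.toLp 2 (U *ᵥ x)‖ = ‖WithLp.toLp 2 x‖ := by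
  rw [← toEuclideanCLM_toLp]
  exact ContinuousLinearMap.norm_map_of_mem_unitary (Unitary.map_mem _ hU) _

theorem Matrix.map_ofReal_mem_unitaryGroup {ι : Type*} [Fintype ι] [DecidableEq ι]
    {M : Matrix ι ι ℝ} (hM : Mᵀ * M = 1) : M.map ((↑) : ℝ → ℂ) ∈ unitaryGroup ι ℂ := by
  rw [mem_unitaryGroup_iff', star_eq_conjTranspose, ← conjTranspose_map _ (by intro; simp),
    conjTranspose_eq_transpose_of_trivial,
    show (Complex.ofReal : ℝ → ℂ) = Complex.ofRealHom from rfl, ← Matrix.map_mul, hM]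
  simp

theorem norm_le_card_of_smul_eq_sum {𝕜 E ι : Type*} [NormedField 𝕜] [NormedAddCommGroup E]
    [NormedSpace 𝕜 E] {x : E} (hx : x ≠ 0) {s : Finset ι} {y : ι → E}
    (hy : ∀ j ∈ s, ‖y j‖ ≤ ‖x‖) {z : 𝕜} (h : z • x = ∑ j ∈ s, y j) : ‖z‖ ≤ #s := by
  refine le_of_mul_le_mul_right ?_ (norm_pos_iff.mpr hx)
  calc ‖z‖ * ‖x‖ = ‖∑ j ∈ s, y j‖ := by rw [← h, norm_smul]
    _ ≤ ∑ j ∈ s, ‖y j‖ := norm_sum_le _ _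
    _ ≤ #s * ‖x‖ := by simpa using sum_le_sum hy

theorem Complex.eq_zero_of_norm_ofReal_sub_le {c : ℝ} {μ : ℂ} (h : ‖(c : ℂ) - μ‖ ≤ c)
    (hre : μ.re = 0) : μ = 0 := by
  have hsq : ‖(c : ℂ) - μ‖ ^ 2 ≤ c ^ 2 := pow_le_pow_left₀ (norm_nonneg _) h 2
  rw [Complex.sq_norm, Complex.normSq_apply] at hsq
  simp only [sub_re, ofReal_re, hre, sub_zero, sub_im, ofReal_im, zero_sub] at hsq
  exact Complex.ext hre (by simpa using (by nlinarith : μ.im ^ 2 ≤ 0))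

theorem exists_ne_zero_forall_norm_le {ι E : Type*} [Finite ι] [NormedAddCommGroup E]
    {f : ι → E} (hf : f ≠ 0) : ∃ i, f i ≠ 0 ∧ ∀ j, ‖f j‖ ≤ ‖f i‖ := by
  obtain ⟨j, hj⟩ := Function.ne_iff.mp hf
  have : Nonempty ι := ⟨j⟩
  obtain ⟨i, hi⟩ := Finite.exists_max fun i => ‖f i‖
  exact ⟨i, norm_pos_iff.mp ((norm_pos_iff.mpr hj).trans_le (hi j)), hi⟩

theorem card_filter_mem_le_card_filter_fst_eq {α : Type*} [DecidableEq α]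
    (E : Finset (α × α)) (i : α) (s : Finset α) :
    #{j ∈ s | (i, j) ∈ E} ≤ #(E.filter fun e => e.1 = i) :=
  card_le_card_of_injOn (fun j => (i, j)) (fun j hj => by simp_all)
    (fun _ _ _ _ h => (Prod.ext_iff.mp h).2)

theorem curry_Zmat_map_mulVec (n d : ℕ) (E : Finset (Fin n × Fin n))
    (G : Fin n → Fin n → Matrix (Fin d) (Fin d) ℝ) (v : Fin n × Fin d → ℂ) (i : Fin n) :
    Function.curry ((Zmat n d E G).map Complex.ofReal *ᵥ v) i =
      (#(E.filter fun e => e.1 = i) : ℂ) • Function.curry v i -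
        ∑ j ∈ {i}ᶜ with (i, j) ∈ E, (G i j).map Complex.ofReal *ᵥ Function.curry v j := by
  ext a
  simp only [Pi.sub_apply, Finset.sum_apply, Pi.smul_apply, smul_eq_mul, sum_filter]
  rw [Function.curry_apply, mulVec, dotProduct, Fintype.sum_prod_type,
    Fintype.sum_eq_add_sum_compl i, sub_eq_add_neg, ← sum_neg_distrib]
  congr 1
  · simp [Zmat, apply_ite Complex.ofReal, ite_mul]
  · refine sum_congr rfl fun j hj => ?_
    have hij : i ≠ j := by simpa [eq_comm] using hj
    by_cases hE : (i, j) ∈ E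
    · simp [Zmat, hij, hE, mulVec, dotProduct]
    · simp [Zmat, hij, hE]

theorem stmt11_general (n d : ℕ) (E : Finset (Fin n × Fin n))
    (G : Fin n → Fin n → Matrix (Fin d) (Fin d) ℝ)
    (hG : ∀ i j, (i, j) ∈ E → (G i j)ᵀ * G i j = 1) :
    ∀ μ : ℂ, μ ∈ spectrum ℂ ((Zmat n d E G).map Complex.ofReal) →
      μ.re = 0 → μ = 0 := by
  intro μ hμ hre
  obtain ⟨v, hv0, hv⟩ := exists_mulVec_eq_smul_of_mem_spectrum hμ
  set x : Fin n → EuclideanSpace ℂ (Fin d) := fun j => WithLp.toLp 2 (Function.curry v j)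
  have hx0 : x ≠ 0 := fun h =>
    hv0 <| funext fun p => congrFun (congrArg WithLp.ofLp (congrFun h p.1)) p.2
  obtain ⟨i, hi0, hmax⟩ := exists_ne_zero_forall_norm_le hx0
  set c := #(E.filter fun e => e.1 = i)
  have hrow : (((c : ℝ) : ℂ) - μ) • x i =
      ∑ j ∈ {i}ᶜ with (i, j) ∈ E,
        WithLp.toLp 2 ((G i j).map Complex.ofReal *ᵥ Function.curry v j) := by
    have h := curry_Zmat_map_mulVec n d E G v i
    rw [hv] at h
    change μ • Function.curry v i = _ at h
    rw [← WithLp.toLp_sum, sub_smul, ← WithLp.toLp_smul, ← WithLp.toLp_smul, ← WithLp.toLp_sub,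
      Complex.ofReal_natCast, h, sub_sub_cancel]
  have hnorm : ‖((c : ℝ) : ℂ) - μ‖ ≤ c := by
    refine (norm_le_card_of_smul_eq_sum hi0 (fun j hj => ?_) hrow).trans
      (by exact_mod_cast card_filter_mem_le_card_filter_fst_eq E i _)
    rw [norm_toLp_mulVec_of_mem_unitaryGroup
      (map_ofReal_mem_unitaryGroup (hG i j (mem_filter.mp hj).2))]
    exact hmax j
  exact Complex.eq_zero_of_norm_ofReal_sub_le hnorm hre

/-- for a QSC graph with orthogonal edge matrices, every purely imaginary
eigenvalue of `Z` is zero. -/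
theorem stmt11 (n d : ℕ) (E : Finset (Fin n × Fin n)) (hqsc : QSC n E)
    (G : Fin n → Fin n → Matrix (Fin d) (Fin d) ℝ)
    (hG : ∀ i j, (i, j) ∈ E → (G i j)ᵀ * G i j = 1) :
    ∀ μ : ℂ, μ ∈ spectrum ℂ ((Zmat n d E G).map Complex.ofReal) →
      μ.re = 0 → μ = 0 :=
  stmt11_general n d E G hG
end
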